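/- arXiv:2204.09499 — 4 statements merged into one kernel-verified Lean document; each statement's English description precedes it below -/
import Mathlib

section
/- Let f : {0,1} → ℝ be a gamble and I = [p̲,p̄] ⊆ [0,1] an interval forecast. Then Ē_I(f) ≤ 0 if and only if there exist real numbers p ≤ p̲, q ≥ p̄ and α, β ≥ 0 such that f(x) = α·(p − x) + β·(x − q) for all x ∈ {0,1}. -/
open Filter Classical

/-- Situations: finite binary strings. -/
abbrev Situation := List Bool

/-- Paths: infinite binary sequences. -/
abbrev BinPath := ℕ → Bool

/-- The length-`n` prefix `ω_{1:n}` of a path. -/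
def pref (ω : BinPath) (n : ℕ) : Situation := List.ofFn (fun i : Fin n => ω i)

/-- The real value of a bit. -/
def bit (x : Bool) : ℝ := if x then 1 else 0

/-- Local expectation `E_p(f) = p f(1) + (1-p) f(0)` of a gamble `f : Bool → ℝ`. -/
def localE (p : ℝ) (f : Bool → ℝ) : ℝ := p * f true + (1 - p) * f false

/-- Upper expectation of a gamble for interval forecast `[lo, hi]`. -/
def upperE (lo hi : ℝ) (f : Bool → ℝ) : ℝ := max (localE lo f) (localE hi f)

/-- A forecasting system, given by lower and upper bounds `lo hi : Situation → ℝ`,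
is proper when `0 ≤ lo s ≤ hi s ≤ 1` everywhere. -/
def IsForecastingSystem (lo hi : Situation → ℝ) : Prop :=
  ∀ s, 0 ≤ lo s ∧ lo s ≤ hi s ∧ hi s ≤ 1

/-- The process difference `ΔF(s) : x ↦ F(s·x) − F(s)`. -/
def diffP (F : Situation → ℝ) (s : Situation) : Bool → ℝ := fun x => F (s ++ [x]) - F s

/-- A supermartingale for the forecasting system `(lo, hi)`. -/
def IsSupermartingale (lo hi : Situation → ℝ) (F : Situation → ℝ) : Prop :=
  ∀ s, upperE (lo s) (hi s) (diffP F s) ≤ 0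

/-- A test supermartingale: a nonnegative supermartingale starting at 1. -/
def IsTestSupermartingale (lo hi : Situation → ℝ) (F : Situation → ℝ) : Prop :=
  IsSupermartingale lo hi F ∧ (∀ s, 0 ≤ F s) ∧ F [] = 1

/-- A real process is (positive) rational-valued and recursive. -/
def IsRecursiveRational (F : Situation → ℝ) : Prop :=
  ∃ q : Situation → ℚ, Computable q ∧ ∀ s, (q s : ℝ) = F s

/-- A real process is computable. -/
def IsComputableProcess (F : Situation → ℝ) : Prop :=
  ∃ q : Situation → ℕ → ℚ, Computable₂ q ∧
    ∀ s n, |F s - q s n| < (2 : ℝ) ^ (-(n : ℤ))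

/-- A real process is lower semicomputable. -/
def IsLSCProcess (F : Situation → ℝ) : Prop :=
  ∃ q : Situation → ℕ → ℚ, Computable₂ q ∧
    (∀ s n, q s n ≤ q s (n + 1)) ∧
    ∀ s, Tendsto (fun m => (q s m : ℝ)) atTop (nhds (F s))

/-- A (real) growth function: computable, nonnegative, nondecreasing and unbounded. -/
def IsGrowthFunction (τ : ℕ → ℝ) : Prop :=
  (∀ n, 0 ≤ τ n) ∧ (∀ n, τ n ≤ τ (n + 1)) ∧ Tendsto τ atTop atTop ∧
    ∃ q : ℕ → ℕ → ℚ, Computable₂ q ∧ ∀ n m, |τ n - q n m| < (2 : ℝ) ^ (-(m : ℤ))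

/-- A real process is unbounded on a path: `limsup_n T(ω_{1:n}) = ∞`. -/
def UnboundedOn (T : Situation → ℝ) (ω : BinPath) : Prop :=
  limsup (fun n => ((T (pref ω n) : ℝ) : EReal)) atTop = ⊤

/-- A real process is computably unbounded on a path:
`limsup_n [T(ω_{1:n}) − τ(n)] ≥ 0` for some growth function `τ`. -/
def ComputablyUnboundedOn (T : Situation → ℝ) (ω : BinPath) : Prop :=
  ∃ τ : ℕ → ℝ, IsGrowthFunction τ ∧
    0 ≤ limsup (fun n => ((T (pref ω n) - τ n : ℝ) : EReal)) atTop

/-- Computable randomness for the forecasting system `(lo, hi)`: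
no recursive positive rational test supermartingale is unbounded on `ω`. -/
def CRandom (lo hi : Situation → ℝ) (ω : BinPath) : Prop :=
  ∀ T : Situation → ℝ, IsRecursiveRational T → (∀ s, 0 < T s) →
    IsTestSupermartingale lo hi T → ¬ UnboundedOn T ω

/-- Schnorr randomness for the forecasting system `(lo, hi)`:
no recursive positive rational test supermartingale is computably unbounded on `ω`. -/
def SchnorrRandom (lo hi : Situation → ℝ) (ω : BinPath) : Prop :=
  ∀ T : Situation → ℝ, IsRecursiveRational T → (∀ s, 0 < T s) →
    IsTestSupermartingale lo hi T → ¬ ComputablyUnboundedOn T ω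

/-- Martin-Löf randomness for the forecasting system `(lo, hi)`:
no lower semicomputable test supermartingale is unbounded on `ω`. -/
def MLRandom (lo hi : Situation → ℝ) (ω : BinPath) : Prop :=
  ∀ T : Situation → ℝ, IsLSCProcess T →
    IsTestSupermartingale lo hi T → ¬ UnboundedOn T ω

/-- A selection process is temporal if its value depends only on the length. -/
def IsTemporal (S : Situation → Bool) : Prop :=
  ∀ s t : Situation, s.length = t.length → S s = S t

/-- Value of a selection process along a path. -/
def selVal (S : Situation → Bool) (ω : BinPath) (k : ℕ) : ℝ := if S (pref ω k) then 1 else 0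

/-- `ω` is `𝒮`-random for the forecasting system `(lo, hi)`. -/
def SSetRandom (𝒮 : Set (Situation → Bool)) (lo hi : Situation → ℝ) (ω : BinPath) : Prop :=
  ∀ S ∈ 𝒮,
    Tendsto (fun n => ∑ k ∈ Finset.range n, selVal S ω k) atTop atTop →
      0 ≤ liminf (fun n =>
          (((∑ k ∈ Finset.range n, selVal S ω k * (bit (ω k) - lo (pref ω k))) /
              (∑ k ∈ Finset.range n, selVal S ω k) : ℝ) : EReal)) atTop ∧
        limsup (fun n =>
          (((∑ k ∈ Finset.range n, selVal S ω k * (bit (ω k) - hi (pref ω k))) /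
              (∑ k ∈ Finset.range n, selVal S ω k) : ℝ) : EReal)) atTop ≤ 0

/-- Weak Church randomness: the selection-process conditions hold for all
recursive temporal selection processes. -/
def WCHRandom (lo hi : Situation → ℝ) (ω : BinPath) : Prop :=
  SSetRandom {S | Computable S ∧ IsTemporal S} lo hi ω

/-- Global upper expectation of a bounded global gamble `f : BinPath → ℝ`. -/
noncomputable def globalUpperE (lo hi : Situation → ℝ) (f : BinPath → ℝ) : ℝ :=
  sInf {m : ℝ | ∃ M : Situation → ℝ, IsSupermartingale lo hi M ∧ M [] = m ∧
    ∀ ω : BinPath, (f ω : EReal) ≤ liminf (fun n => ((M (pref ω n) : ℝ) : EReal)) atTop}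

/-- Upper probability of an event. -/
noncomputable def upperProb (lo hi : Situation → ℝ) (A : Set BinPath) : ℝ :=
  globalUpperE lo hi (Set.indicator A 1)

/-- An event is almost sure if its complement has upper probability zero. -/
def AlmostSure (lo hi : Situation → ℝ) (A : Set BinPath) : Prop :=
  upperProb lo hi Aᶜ = 0

/-- The set of recursive positive rational test processes `𝓕_C`. -/
def FsetC : Set (Situation → ℝ) :=
  {F | IsRecursiveRational F ∧ (∀ s, 0 < F s) ∧ F [] = 1}

/-- The set of lower semicomputable test processes `𝓕_ML`. -/
def FsetML : Set (Situation → ℝ) :=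
  {F | IsLSCProcess F ∧ (∀ s, 0 ≤ F s) ∧ F [] = 1}

/-- The temporal selection process `S^r_F` associated with a real process `F`
and a number `r`. -/
noncomputable def selProc (r : ℝ) (F : Situation → ℝ) : Situation → Bool := fun s =>
  if ∃ t : Situation, t.length = s.length ∧ 0 < localE r (diffP F t) then true else false

/-- The set of selection processes `𝒮^{p,q}_𝓕`. -/
def SelSet (p q : ℝ) (𝓕 : Set (Situation → ℝ)) : Set (Situation → Bool) :=
  {S | ∃ F ∈ 𝓕, ∃ r ∈ ({p, q} : Set ℝ), S = selProc r F}

/-- The temporal precise forecasting system `φ^ϖ_{p,q}`. -/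
def tempFS (p q : ℝ) (ϖ : BinPath) : Situation → ℝ := fun s => if ϖ s.length then q else p

/-- A test process `F` is generated by the multiplier process `D`. -/
def GeneratedBy (D : Situation → Bool → ℝ) (F : Situation → ℝ) : Prop :=
  F [] = 1 ∧ ∀ s x, F (s ++ [x]) = F s * D s x

/-- A lower semicomputable multiplier process: a nonnegative gamble process that
is lower semicomputable. -/
def IsLSCMultiplier (D : Situation → Bool → ℝ) : Prop :=
  (∀ s x, 0 ≤ D s x) ∧
  ∃ q : Situation → Bool → ℕ → ℚ,
    Computable (fun p : Situation × Bool × ℕ => q p.1 p.2.1 p.2.2) ∧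
    (∀ s x n, q s x n ≤ q s x (n + 1)) ∧
    ∀ s x, Tendsto (fun m => (q s x m : ℝ)) atTop (nhds (D s x))

theorem localE_bit (f : Bool → ℝ) (x : Bool) : localE (bit x) f = f x := by
  cases x <;> simp [localE, bit]

theorem localE_eq_add_mul (r : ℝ) (f : Bool → ℝ) :
    localE r f = f false + r * (f true - f false) := by
  unfold localE; ring

/-- Since `r ↦ localE r f` is affine, it is the linear interpolation of its values at `p` and
`q`; evaluating at `r = bit x` expresses `f` through `p - bit x` and `bit x - q`. -/
theorem eq_interpolate_localE (f : Bool → ℝ) {p q : ℝ} (hpq : p < q) (x : Bool) :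
    f x = -localE q f / (q - p) * (p - bit x) + -localE p f / (q - p) * (bit x - q) := by
  rw [← localE_bit f x]
  simp only [localE_eq_add_mul]
  field_simp [(sub_pos.mpr hpq).ne']
  ring

theorem localE_sub_bit_add_bit_sub (p q α β r : ℝ) :
    localE r (fun x => α * (p - bit x) + β * (bit x - q)) = α * (p - r) + β * (r - q) := by
  simp only [localE, bit, if_true, Bool.false_eq_true, if_false]
  ring

theorem localE_nonpos_of_mem_Icc {p q α β r : ℝ} (hα : 0 ≤ α) (hβ : 0 ≤ β) (hpr : p ≤ r)
    (hrq : r ≤ q) : localE r (fun x => α * (p - bit x) + β * (bit x - q)) ≤ 0 := by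
  rw [localE_sub_bit_add_bit_sub]
  linarith [mul_nonneg hα (sub_nonneg.mpr hpr), mul_nonneg hβ (sub_nonneg.mpr hrq)]

/-- The set of `r` with `localE r f ≤ 0` is a half-line, so it extends `[plo, phi]` strictly
to the left or to the right. -/
theorem exists_lt_localE_nonpos {f : Bool → ℝ} {plo phi : ℝ} (hle : plo ≤ phi)
    (hf : upperE plo phi f ≤ 0) :
    ∃ p q : ℝ, p ≤ plo ∧ phi ≤ q ∧ p < q ∧ localE p f ≤ 0 ∧ localE q f ≤ 0 := by
  obtain ⟨hlo, hhi⟩ := max_le_iff.mp hf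
  rw [localE_eq_add_mul] at hlo hhi
  rcases le_total 0 (f true - f false) with hd | hd
  · refine ⟨plo - 1, phi, by linarith, le_rfl, by linarith, ?_, ?_⟩ <;>
      rw [localE_eq_add_mul] <;> nlinarith
  · refine ⟨plo, phi + 1, le_rfl, by linarith, by linarith, ?_, ?_⟩ <;>
      rw [localE_eq_add_mul] <;> nlinarith

theorem statement_1_general (f : Bool → ℝ) (plo phi : ℝ)
    (hle : plo ≤ phi) :
    upperE plo phi f ≤ 0 ↔
      ∃ p q α β : ℝ, p ≤ plo ∧ phi ≤ q ∧ 0 ≤ α ∧ 0 ≤ β ∧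
        ∀ x : Bool, f x = α * (p - bit x) + β * (bit x - q) := by
  constructor
  · intro hf
    obtain ⟨p, q, hp, hq, hpq, hEp, hEq⟩ := exists_lt_localE_nonpos hle hf
    have hqp : 0 < q - p := sub_pos.mpr hpq
    exact ⟨p, q, _, _, hp, hq, div_nonneg (neg_nonneg.mpr hEq) hqp.le,
      div_nonneg (neg_nonneg.mpr hEp) hqp.le, eq_interpolate_localE f hpq⟩
  · rintro ⟨p, q, α, β, hp, hq, hα, hβ, hf⟩
    obtain rfl : f = fun x => α * (p - bit x) + β * (bit x - q) := funext hf
    exact max_le (localE_nonpos_of_mem_Icc hα hβ hp (hle.trans hq))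
      (localE_nonpos_of_mem_Icc hα hβ (hp.trans hle) hq)

/-- `Ē_I(f) ≤ 0` iff `f` is of the form `α(p − X) + β(X − q)`
with `p ≤ p̲`, `q ≥ p̄` and `α, β ≥ 0`. -/
theorem statement_1 (f : Bool → ℝ) (plo phi : ℝ)
    (h0 : 0 ≤ plo) (hle : plo ≤ phi) (h1 : phi ≤ 1) :
    upperE plo phi f ≤ 0 ↔
      ∃ p q α β : ℝ, p ≤ plo ∧ phi ≤ q ∧ 0 ≤ α ∧ 0 ≤ β ∧
        ∀ x : Bool, f x = α * (p - bit x) + β * (bit x - q) :=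
  statement_1_general f plo phi hle
end

section
/- Let φ be a forecasting system and let (A_n)_{n∈ℕ₀} be a sequence of events, each almost sure for φ. Then the intersection ⋂_{n∈ℕ₀} A_n is almost sure for φ. -/
open Filter Classical

/-! Upper probability is countably subadditive, and nonnegative. Given `ε > 0`, pick for each `n`
a nonnegative supermartingale `Mₙ` with `Mₙ(□) < P̄(Bₙ) + ε / 2ⁿ⁺¹` whose liminf is at least `1`
on `Bₙ`. Since forecasts lie in `[0,1]`, the truncated partial sums `min (∑_{n<N} Mₙ) 1` are still
supermartingales; their increasing limit starts below `∑ₙ P̄(Bₙ) + ε` and has liminf at least `1`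
on `⋃ₙ Bₙ`. Nonnegativity holds because a supermartingale never increases along the path that
always moves to the child with the smaller value. Apply this to `Bₙ = Aₙᶜ`. -/

open Topology

section LocalExpectation

theorem localE_const (p c : ℝ) : localE p (fun _ => c) = c := by
  simp only [localE]; ring

theorem localE_sum {ι : Type*} (p : ℝ) (t : Finset ι) (f : ι → Bool → ℝ) :
    localE p (fun x => ∑ i ∈ t, f i x) = ∑ i ∈ t, localE p (f i) := by
  simp only [localE, Finset.mul_sum, Finset.sum_add_distrib]

theorem localE_mono {p : ℝ} (hp₀ : 0 ≤ p) (hp₁ : p ≤ 1) {f g : Bool → ℝ} (hfg : f ≤ g) :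
    localE p f ≤ localE p g := by
  unfold localE
  have : 0 ≤ 1 - p := sub_nonneg.2 hp₁
  gcongr
  · exact hfg true
  · exact hfg false

theorem exists_le_localE {p : ℝ} (hp₀ : 0 ≤ p) (hp₁ : p ≤ 1) (f : Bool → ℝ) :
    ∃ x, f x ≤ localE p f := by
  unfold localE
  rcases le_total (f true) (f false) with h | h
  · exact ⟨true, by nlinarith⟩
  · exact ⟨false, by nlinarith⟩

theorem Filter.Tendsto.localE {ι : Type*} {l : Filter ι} (p : ℝ) {f : ι → Bool → ℝ}
    {g : Bool → ℝ} (hf : ∀ x, Tendsto (fun i => f i x) l (𝓝 (g x))) :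
    Tendsto (fun i => localE p (f i)) l (𝓝 (localE p g)) :=
  ((hf true).const_mul p).add ((hf false).const_mul (1 - p))

end LocalExpectation

theorem IsForecastingSystem.lo_mem_Icc {lo hi : Situation → ℝ} (hφ : IsForecastingSystem lo hi)
    (s : Situation) : lo s ∈ Set.Icc 0 1 :=
  ⟨(hφ s).1, (hφ s).2.1.trans (hφ s).2.2⟩

theorem IsForecastingSystem.hi_mem_Icc {lo hi : Situation → ℝ} (hφ : IsForecastingSystem lo hi)
    (s : Situation) : hi s ∈ Set.Icc 0 1 :=
  ⟨(hφ s).1.trans (hφ s).2.1, (hφ s).2.2⟩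

theorem isSupermartingale_iff {lo hi M : Situation → ℝ} :
    IsSupermartingale lo hi M ↔ ∀ s,
      localE (lo s) (fun x => M (s ++ [x])) ≤ M s ∧ localE (hi s) (fun x => M (s ++ [x])) ≤ M s := by
  have hdiff : ∀ p s, localE p (diffP M s) = localE p (fun x => M (s ++ [x])) - M s := by
    intro p s; simp only [localE, diffP]; ring
  simp only [IsSupermartingale, upperE, max_le_iff, hdiff, sub_nonpos]

namespace IsSupermartingale

variable {lo hi : Situation → ℝ}

theorem const (c : ℝ) : IsSupermartingale lo hi (fun _ => c) :=
  isSupermartingale_iff.2 fun s => by simp only [localE_const, le_refl, and_self]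

theorem sum {ι : Type*} (t : Finset ι) {M : ι → Situation → ℝ}
    (hM : ∀ i ∈ t, IsSupermartingale lo hi (M i)) :
    IsSupermartingale lo hi (fun s => ∑ i ∈ t, M i s) := by
  refine isSupermartingale_iff.2 fun s => ⟨?_, ?_⟩ <;> rw [localE_sum]
  · exact Finset.sum_le_sum fun i hi => (isSupermartingale_iff.1 (hM i hi) s).1
  · exact Finset.sum_le_sum fun i hi => (isSupermartingale_iff.1 (hM i hi) s).2

theorem min_const (hφ : IsForecastingSystem lo hi) {M : Situation → ℝ}
    (hM : IsSupermartingale lo hi M) (c : ℝ) :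
    IsSupermartingale lo hi (fun s => min (M s) c) := by
  have key : ∀ {p : ℝ} (s : Situation), p ∈ Set.Icc 0 1 →
      localE p (fun x => M (s ++ [x])) ≤ M s →
      localE p (fun x => min (M (s ++ [x])) c) ≤ min (M s) c := by
    intro p s ⟨hp₀, hp₁⟩ hle
    refine le_min ((localE_mono hp₀ hp₁ fun x => min_le_left _ _).trans hle) ?_
    calc localE p (fun x => min (M (s ++ [x])) c) ≤ localE p (fun _ => c) :=
          localE_mono hp₀ hp₁ fun x => min_le_right _ _
      _ = c := localE_const p c
  refine isSupermartingale_iff.2 fun s => ?_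
  have hs := isSupermartingale_iff.1 hM s
  exact ⟨key s (hφ.lo_mem_Icc s) hs.1, key s (hφ.hi_mem_Icc s) hs.2⟩

theorem of_tendsto {ι : Type*} {l : Filter ι} [l.NeBot] {M : ι → Situation → ℝ}
    {Q : Situation → ℝ} (hM : ∀ i, IsSupermartingale lo hi (M i))
    (hQ : ∀ s, Tendsto (fun i => M i s) l (𝓝 (Q s))) : IsSupermartingale lo hi Q := by
  refine isSupermartingale_iff.2 fun s => ⟨?_, ?_⟩
  · exact le_of_tendsto_of_tendsto' (Tendsto.localE _ fun _ => hQ _) (hQ s)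
      fun i => (isSupermartingale_iff.1 (hM i) s).1
  · exact le_of_tendsto_of_tendsto' (Tendsto.localE _ fun _ => hQ _) (hQ s)
      fun i => (isSupermartingale_iff.1 (hM i) s).2

theorem exists_succ_le (hφ : IsForecastingSystem lo hi) {M : Situation → ℝ}
    (hM : IsSupermartingale lo hi M) (s : Situation) : ∃ x, M (s ++ [x]) ≤ M s := by
  obtain ⟨x, hx⟩ := exists_le_localE (hφ.lo_mem_Icc s).1 (hφ.lo_mem_Icc s).2
    (fun x => M (s ++ [x]))
  exact ⟨x, hx.trans (isSupermartingale_iff.1 hM s).1⟩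

end IsSupermartingale

theorem pref_succ (ω : BinPath) (n : ℕ) : pref ω (n + 1) = pref ω n ++ [ω n] := by
  simp only [pref, List.ofFn_succ', List.concat_eq_append, Fin.val_castSucc, Fin.val_last]

theorem exists_pref_eq_iterate (next : Situation → Bool) (s : Situation) :
    ∃ ω : BinPath, ∀ n, pref ω (s.length + n) = (fun t => t ++ [next t])^[n] s := by
  set extend : Situation → Situation := fun t => t ++ [next t]
  refine ⟨fun k => if h : k < s.length then s[k] else next (extend^[k - s.length] s), ?_⟩
  intro n
  induction n with
  | zero =>
    refine List.ext_getElem (by simp [pref]) fun i hi _ => ?_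
    simp only [pref, List.getElem_ofFn]
    rw [dif_pos (by simpa [pref] using hi)]
    rfl
  | succ n ih =>
    rw [← add_assoc, pref_succ, ih, Function.iterate_succ_apply', dif_neg (by omega),
      Nat.add_sub_cancel_left]

theorem exists_path_le_of_forall_exists_succ_le {F : Situation → ℝ}
    (hF : ∀ t, ∃ x, F (t ++ [x]) ≤ F t) (s : Situation) :
    ∃ ω : BinPath, ∀ n ≥ s.length, F (pref ω n) ≤ F s := by
  choose next hnext using hF
  obtain ⟨ω, hω⟩ := exists_pref_eq_iterate next s
  have hdescent : ∀ n, F ((fun t => t ++ [next t])^[n] s) ≤ F s := by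
    intro n
    induction n with
    | zero => rfl
    | succ n ih =>
      rw [Function.iterate_succ_apply']
      exact (hnext _).trans ih
  refine ⟨ω, fun n hn => ?_⟩
  obtain ⟨k, rfl⟩ := Nat.exists_eq_add_of_le hn
  exact hω k ▸ hdescent k

theorem IsSupermartingale.nonneg {lo hi : Situation → ℝ} (hφ : IsForecastingSystem lo hi)
    {M : Situation → ℝ} (hM : IsSupermartingale lo hi M)
    (hlim : ∀ ω, 0 ≤ liminf (fun n => (M (pref ω n) : EReal)) atTop) (s : Situation) :
    0 ≤ M s := by
  obtain ⟨ω, hω⟩ := exists_path_le_of_forall_exists_succ_le (hM.exists_succ_le hφ) s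
  have : liminf (fun n => (M (pref ω n) : EReal)) atTop ≤ M s :=
    liminf_le_of_frequently_le' (Eventually.frequently
      ((eventually_ge_atTop s.length).mono fun n hn => EReal.coe_le_coe_iff.2 (hω n hn)))
  exact EReal.coe_nonneg.1 ((hlim ω).trans this)

theorem le_liminf_min_coe {ι : Type*} {l : Filter ι} {u : ι → ℝ} {c : ℝ}
    (h : (c : EReal) ≤ liminf (fun k => (u k : EReal)) l) :
    (c : EReal) ≤ liminf (fun k => ((min (u k) c : ℝ) : EReal)) l := by
  rw [le_liminf_iff] at h ⊢
  intro y hy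
  filter_upwards [h y hy] with k hk
  rw [EReal.coe_strictMono.monotone.map_min]
  exact lt_min hk hy

section UpperProbability

variable {lo hi : Situation → ℝ}

/-- The supermartingales in `upperProb lo hi A`, made nonnegative (which they are anyway, by
`IsSupermartingale.nonneg`) so that the indicator bound only has to be checked on `A`. -/
structure Superhedges (lo hi : Situation → ℝ) (A : Set BinPath) (M : Situation → ℝ) : Prop where
  isSupermartingale : IsSupermartingale lo hi M
  nonneg : ∀ s, 0 ≤ M s
  one_le_liminf : ∀ ω ∈ A, 1 ≤ liminf (fun n => (M (pref ω n) : EReal)) atTop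

theorem Superhedges.const_one (A : Set BinPath) : Superhedges lo hi A (fun _ => 1) :=
  ⟨IsSupermartingale.const 1, fun _ => zero_le_one, fun ω _ => by simp⟩

theorem upperProb_eq_sInf (hφ : IsForecastingSystem lo hi) (A : Set BinPath) :
    upperProb lo hi A = sInf ((fun M => M []) '' {M | Superhedges lo hi A M}) := by
  unfold upperProb globalUpperE
  congr 1
  ext m
  constructor
  · rintro ⟨M, hM, rfl, hdom⟩
    refine ⟨M, ⟨hM, hM.nonneg hφ fun ω => ?_, fun ω hω => ?_⟩, rfl⟩
    · exact (EReal.coe_nonneg.2 (Set.indicator_nonneg (fun _ _ => zero_le_one) ω)).trans (hdom ω)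
    · simpa [Set.indicator_of_mem hω] using hdom ω
  · rintro ⟨M, ⟨hM, hM₀, hA⟩, rfl⟩
    refine ⟨M, hM, rfl, fun ω => ?_⟩
    by_cases hω : ω ∈ A
    · simpa [Set.indicator_of_mem hω] using hA ω hω
    · rw [Set.indicator_of_notMem hω]
      exact le_liminf_of_le (by isBoundedDefault)
        (Eventually.of_forall fun n => EReal.coe_nonneg.2 (hM₀ _))

theorem upperProb_nonneg (hφ : IsForecastingSystem lo hi) (A : Set BinPath) :
    0 ≤ upperProb lo hi A := by
  rw [upperProb_eq_sInf hφ]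
  exact Real.sInf_nonneg (by rintro _ ⟨M, hM, rfl⟩; exact hM.nonneg [])

theorem Superhedges.upperProb_le (hφ : IsForecastingSystem lo hi) {A : Set BinPath}
    {M : Situation → ℝ} (hM : Superhedges lo hi A M) : upperProb lo hi A ≤ M [] := by
  rw [upperProb_eq_sInf hφ]
  exact csInf_le ⟨0, by rintro _ ⟨N, hN, rfl⟩; exact hN.nonneg []⟩ ⟨M, hM, rfl⟩

theorem exists_superhedges_lt_of_upperProb_lt (hφ : IsForecastingSystem lo hi)
    {A : Set BinPath} {c : ℝ} (h : upperProb lo hi A < c) :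
    ∃ M, Superhedges lo hi A M ∧ M [] < c := by
  rw [upperProb_eq_sInf hφ] at h
  have hne : {M | Superhedges lo hi A M}.Nonempty := ⟨_, Superhedges.const_one A⟩
  obtain ⟨_, ⟨M, hM, rfl⟩, hlt⟩ := exists_lt_of_csInf_lt (hne.image _) h
  exact ⟨M, hM, hlt⟩

theorem Superhedges.iUnion (hφ : IsForecastingSystem lo hi) {A : ℕ → Set BinPath}
    {M : ℕ → Situation → ℝ} (hM : ∀ n, Superhedges lo hi (A n) (M n))
    (hsum : Summable fun n => M n []) :
    ∃ Q, Superhedges lo hi (⋃ n, A n) Q ∧ Q [] ≤ ∑' n, M n [] := by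
  -- Truncating the partial sums at `1` keeps them bounded, so that they converge.
  set S : ℕ → Situation → ℝ := fun N s => min (∑ n ∈ Finset.range N, M n s) 1
  have hS_mono : ∀ s, Monotone fun N => S N s := fun s N₁ N₂ h =>
    min_le_min_right _ (Finset.sum_le_sum_of_subset_of_nonneg (Finset.range_subset_range.2 h)
      fun n _ _ => (hM n).nonneg s)
  have hS_bdd : ∀ s, BddAbove (Set.range fun N => S N s) := fun s =>
    ⟨1, by rintro _ ⟨N, rfl⟩; exact min_le_right _ _⟩
  have hS_le : ∀ N s, S N s ≤ ⨆ N, S N s := fun N s => le_ciSup (hS_bdd s) N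
  refine ⟨fun s => ⨆ N, S N s, ⟨?_, fun s => ?_, fun ω hω => ?_⟩, ?_⟩
  · exact IsSupermartingale.of_tendsto
      (fun N => (IsSupermartingale.sum _ fun n _ => (hM n).isSupermartingale).min_const hφ 1)
      fun s => tendsto_atTop_ciSup (hS_mono s) (hS_bdd s)
  · simpa [S] using hS_le 0 s
  · obtain ⟨n, hn⟩ := Set.mem_iUnion.1 hω
    refine (le_liminf_min_coe (by simpa using (hM n).one_le_liminf ω hn)).trans
      (liminf_le_liminf (Eventually.of_forall fun k => EReal.coe_le_coe_iff.2 ?_))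
    refine le_trans (min_le_min_right _ ?_) (hS_le (n + 1) _)
    exact Finset.single_le_sum (fun i _ => (hM i).nonneg _) (Finset.self_mem_range_succ n)
  · exact ciSup_le fun N =>
      (min_le_left _ _).trans (hsum.sum_le_tsum _ fun n _ => (hM n).nonneg [])

theorem upperProb_iUnion_le (hφ : IsForecastingSystem lo hi) (A : ℕ → Set BinPath)
    (hA : Summable fun n => upperProb lo hi (A n)) :
    upperProb lo hi (⋃ n, A n) ≤ ∑' n, upperProb lo hi (A n) := by
  refine le_of_forall_pos_le_add fun ε hε => ?_
  have hslack : ∀ n, upperProb lo hi (A n) < upperProb lo hi (A n) + ε / 2 / 2 ^ n :=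
    fun n => lt_add_of_pos_right _ (by positivity)
  choose M hM hMlt using fun n => exists_superhedges_lt_of_upperProb_lt hφ (hslack n)
  have hbound : Summable fun n => upperProb lo hi (A n) + ε / 2 / 2 ^ n :=
    hA.add (summable_geometric_two' ε)
  have hMsum : Summable fun n => M n [] :=
    Summable.of_nonneg_of_le (fun n => (hM n).nonneg []) (fun n => (hMlt n).le) hbound
  obtain ⟨Q, hQ, hQle⟩ := Superhedges.iUnion hφ hM hMsum
  calc upperProb lo hi (⋃ n, A n) ≤ Q [] := hQ.upperProb_le hφ
    _ ≤ ∑' n, M n [] := hQle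
    _ ≤ ∑' n, (upperProb lo hi (A n) + ε / 2 / 2 ^ n) :=
      hMsum.tsum_le_tsum (fun n => (hMlt n).le) hbound
    _ = ∑' n, upperProb lo hi (A n) + ε := by
      rw [hA.tsum_add (summable_geometric_two' ε), tsum_geometric_two']

end UpperProbability

/-- a countable intersection of almost sure events is almost sure. -/
theorem statement_9 (lo hi : Situation → ℝ) (hφ : IsForecastingSystem lo hi)
    (A : ℕ → Set BinPath) (hA : ∀ n, AlmostSure lo hi (A n)) :
    AlmostSure lo hi (⋂ n, A n) := by
  unfold AlmostSure at hA ⊢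
  rw [Set.compl_iInter]
  refine le_antisymm ?_ (upperProb_nonneg hφ _)
  calc upperProb lo hi (⋃ n, (A n)ᶜ) ≤ ∑' n, upperProb lo hi (A n)ᶜ :=
        upperProb_iUnion_le hφ _ (by simp [hA])
    _ = 0 := by simp [hA]
end

section
/- Let ω ∈ Ω be a path and let I ⊆ (0,1) be an interval forecast contained in the open unit interval. If ω is wCH-random for the stationary forecasting system I, then ω is non-recursive (i.e. the map n ↦ ω_n is not computable). The same conclusion holds if ω is 𝒮-random for I, where 𝒮 is any countable set of selection processes containing all recursive temporal selection processes. -/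
open Filter Classical

private lemma pref_length (ω : BinPath) (k : ℕ) : (pref ω k).length = k := by
  simp [pref]

private lemma sums_tendsto (c : ℕ → Bool) (hc : ∃ᶠ n in atTop, c n = true) :
    Tendsto (fun n => ∑ k ∈ Finset.range n, (if c k then (1:ℝ) else 0)) atTop atTop := by
  refine (not_summable_iff_tendsto_nat_atTop_of_nonneg (fun k => ?_)).mp ?_
  · split <;> norm_num
  · intro hs
    have h0 := hs.tendsto_atTop_zero
    have hev : ∀ᶠ k in atTop, (if c k then (1:ℝ) else 0) < 1/2 :=
      h0.eventually (eventually_lt_nhds (by norm_num))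
    obtain ⟨k, hk1, hk2⟩ := (hc.and_eventually hev).exists
    rw [hk1] at hk2
    norm_num at hk2

private lemma key_lemma (ilo ihi : ℝ) (h0 : 0 < ilo) (h1 : ihi < 1)
    (ω : BinPath) (hω : Computable ω)
    (𝒮 : Set (Situation → Bool))
    (hsub : {S : Situation → Bool | Computable S ∧ IsTemporal S} ⊆ 𝒮) :
    ¬ SSetRandom 𝒮 (fun _ => ilo) (fun _ => ihi) ω := by
  intro hrand
  by_cases hfreq : ∃ᶠ n in atTop, ω n = true
  · set S : Situation → Bool := fun s => ω s.length with hS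
    have hmem : S ∈ 𝒮 := hsub ⟨hω.comp Primrec.list_length.to_comp,
      fun s t h => by simp [hS, h]⟩
    have hsel : ∀ k, selVal S ω k = if ω k then (1:ℝ) else 0 := by
      intro k; simp [selVal, hS, pref_length]
    have htend : Tendsto (fun n => ∑ k ∈ Finset.range n, selVal S ω k) atTop atTop := by
      simp only [hsel]; exact sums_tendsto ω hfreq
    obtain ⟨-, h2⟩ := hrand S hmem htend
    have hnum : ∀ n, (∑ k ∈ Finset.range n, selVal S ω k * (bit (ω k) - ihi))
        = (1 - ihi) * ∑ k ∈ Finset.range n, selVal S ω k := by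
      intro n
      rw [Finset.mul_sum]
      refine Finset.sum_congr rfl fun k _ => ?_
      rcases Bool.eq_false_or_eq_true (ω k) with h | h <;> simp [hsel, h, bit] <;> ring
    have hev : ∀ᶠ n in atTop,
        (((∑ k ∈ Finset.range n, selVal S ω k * (bit (ω k) - ihi)) /
            (∑ k ∈ Finset.range n, selVal S ω k) : ℝ) : EReal) = ((1 - ihi : ℝ) : EReal) := by
      filter_upwards [htend.eventually_ge_atTop 1] with n hn
      have hd : (∑ k ∈ Finset.range n, selVal S ω k) ≠ 0 := by linarith
      rw [hnum, mul_div_assoc, div_self hd, mul_one]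
    have h3 := Filter.limsup_congr hev ▸ h2
    rw [Filter.limsup_const] at h3
    have : (1 - ihi : ℝ) ≤ (0 : ℝ) := by exact_mod_cast h3
    linarith
  · have hfreq' : ∃ᶠ n in atTop, ω n = false := by
      rw [Filter.not_frequently] at hfreq
      exact (hfreq.mono fun n h => by simpa using h).frequently
    set S : Situation → Bool := fun s => !ω s.length with hS
    have hmem : S ∈ 𝒮 := hsub ⟨((Primrec.dom_bool not).to_comp.comp hω).comp
      Primrec.list_length.to_comp, fun s t h => by simp [hS, h]⟩
    have hsel : ∀ k, selVal S ω k = if !ω k then (1:ℝ) else 0 := by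
      intro k; simp [selVal, hS, pref_length]
    have htend : Tendsto (fun n => ∑ k ∈ Finset.range n, selVal S ω k) atTop atTop := by
      simp only [hsel]
      exact sums_tendsto (fun n => !ω n) (hfreq'.mono fun n h => by simp [h])
    obtain ⟨h2, -⟩ := hrand S hmem htend
    have hnum : ∀ n, (∑ k ∈ Finset.range n, selVal S ω k * (bit (ω k) - ilo))
        = (-ilo) * ∑ k ∈ Finset.range n, selVal S ω k := by
      intro n
      rw [Finset.mul_sum]
      refine Finset.sum_congr rfl fun k _ => ?_
      rcases Bool.eq_false_or_eq_true (ω k) with h | h <;> simp [hsel, h, bit] <;> ring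
    have hev : ∀ᶠ n in atTop,
        (((∑ k ∈ Finset.range n, selVal S ω k * (bit (ω k) - ilo)) /
            (∑ k ∈ Finset.range n, selVal S ω k) : ℝ) : EReal) = ((-ilo : ℝ) : EReal) := by
      filter_upwards [htend.eventually_ge_atTop 1] with n hn
      have hd : (∑ k ∈ Finset.range n, selVal S ω k) ≠ 0 := by linarith
      rw [hnum, mul_div_assoc, div_self hd, mul_one]
    have h3 := Filter.liminf_congr hev ▸ h2
    rw [Filter.liminf_const] at h3
    have : (0 : ℝ) ≤ (-ilo : ℝ) := by exact_mod_cast h3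
    linarith

/-- a path that is wCH-random for a stationary interval forecast
`I ⊆ (0,1)` is non-recursive; the same holds for `𝒮`-randomness when `𝒮` is a
countable superset of the recursive temporal selection processes. -/
theorem statement_12 (ilo ihi : ℝ) (h0 : 0 < ilo) (hle : ilo ≤ ihi) (h1 : ihi < 1)
    (ω : BinPath) :
    (WCHRandom (fun _ => ilo) (fun _ => ihi) ω → ¬ Computable ω) ∧
    (∀ 𝒮 : Set (Situation → Bool), 𝒮.Countable →
      {S : Situation → Bool | Computable S ∧ IsTemporal S} ⊆ 𝒮 →
      SSetRandom 𝒮 (fun _ => ilo) (fun _ => ihi) ω → ¬ Computable ω) := by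
  constructor
  · intro hr hc
    exact key_lemma ilo ihi h0 h1 ω hc _ (fun S hS => hS) hr
  · intro 𝒮 _ hsub hr hc
    exact key_lemma ilo ihi h0 h1 ω hc 𝒮 hsub hr
end

section
/- Let p, q ∈ [0,1] be any real numbers. Then every recursive temporal selection process belongs to 𝒮^{p,q}_{𝓕_C}. -/
open Filter Classical

/-! After a situation selected by `S`, bet on the outcome `b = [0 < r]`: the process moves to `2`
on `b` and to `1` otherwise, and after an unselected situation it moves to `1`. It is a recursive
positive rational test process. After an unselected situation its increment is `1 - F(t) ≤ 0`;
after a selected situation of value `1` its increment has `E_r`-expectation `r` or `1 - r`,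
positive by the choice of `b`. Since `S` is temporal, the all-`¬b` situation of each length
witnesses selection, so `S^r_F = S`. -/

/-- `true` exactly on the situations `t ++ [b]` with `S t`. -/
def stepRewarded (S : Situation → Bool) (b : Bool) (s : Situation) : Bool :=
  decide (s.reverse.head? = some b) && S s.reverse.tail.reverse

lemma stepRewarded_append_singleton (S : Situation → Bool) (b : Bool) (t : Situation) (x : Bool) :
    stepRewarded S b (t ++ [x]) = (decide (x = b) && S t) := by
  simp [stepRewarded]

lemma stepRewarded_append_not (S : Situation → Bool) (b : Bool) (t : Situation) :
    stepRewarded S b (t ++ [!b]) = false := by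
  simp [stepRewarded_append_singleton]

lemma stepRewarded_replicate_not (S : Situation → Bool) (b : Bool) (n : ℕ) :
    stepRewarded S b (List.replicate n (!b)) = false := by
  cases n with
  | zero => rfl
  | succ n => rw [List.replicate_succ', stepRewarded_append_not]

lemma Computable.stepRewarded {S : Situation → Bool} (hS : Computable S) (b : Bool) :
    Computable (stepRewarded S b) :=
  (Primrec.and.to_comp.comp
    (Primrec.eq.comp (Primrec.list_head?.comp Primrec.list_reverse) (Primrec.const _)).decide.to_comp
    (hS.comp (Computable.list_reverse.comp
      (Primrec.list_tail.to_comp.comp Computable.list_reverse)) :))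

noncomputable def stepProcess (S : Situation → Bool) (b : Bool) (s : Situation) : ℝ :=
  bif stepRewarded S b s then 2 else 1

lemma stepProcess_mem_FsetC {S : Situation → Bool} (hS : Computable S) (b : Bool) :
    stepProcess S b ∈ FsetC := by
  refine ⟨⟨fun s => bif stepRewarded S b s then 2 else 1, ?_, fun s => ?_⟩, fun s => ?_, rfl⟩
  · exact Computable.cond (hS.stepRewarded b) (Computable.const 2) (Computable.const 1)
  · cases h : stepRewarded S b s <;> simp [stepProcess, h]
  · cases h : stepRewarded S b s <;> norm_num [stepProcess, h]

lemma localE_diffP_stepProcess_nonpos {S : Situation → Bool} {t : Situation} (hSt : S t = false)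
    (b : Bool) (r : ℝ) : localE r (diffP (stepProcess S b) t) ≤ 0 := by
  have hstep : ∀ x, stepProcess S b (t ++ [x]) = 1 := by
    simp [stepProcess, stepRewarded_append_singleton, hSt]
  have hge : 1 ≤ stepProcess S b t := by
    unfold stepProcess; cases stepRewarded S b t <;> norm_num
  simp only [localE, diffP, hstep]
  linarith

lemma localE_diffP_stepProcess {S : Situation → Bool} {t : Situation} {b : Bool}
    (hSt : S t = true) (hfresh : stepRewarded S b t = false) (r : ℝ) :
    localE r (diffP (stepProcess S b) t) = bif b then r else 1 - r := by
  cases b <;> simp [localE, diffP, stepProcess, stepRewarded_append_singleton, hSt, hfresh] <;> ring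

lemma localE_diffP_stepProcess_pos {S : Situation → Bool} {t : Situation} {r : ℝ}
    (hSt : S t = true) (hfresh : stepRewarded S (decide (0 < r)) t = false) :
    0 < localE r (diffP (stepProcess S (decide (0 < r))) t) := by
  rw [localE_diffP_stepProcess hSt hfresh]
  by_cases hr : 0 < r
  · simp [hr]
  · simp [hr]
    linarith

lemma selProc_stepProcess {S : Situation → Bool} (hS : IsTemporal S) (r : ℝ) :
    selProc r (stepProcess S (decide (0 < r))) = S := by
  funext s
  cases hSs : S s with
  | true =>
    have hwitness := localE_diffP_stepProcess_pos (r := r)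
      ((hS _ s (by simp)).trans hSs) (stepRewarded_replicate_not S _ s.length)
    simp only [selProc]
    rw [if_pos ⟨_, List.length_replicate, hwitness⟩]
  | false =>
    simp only [selProc]
    rw [if_neg]
    rintro ⟨t, hlen, hpos⟩
    exact (localE_diffP_stepProcess_nonpos ((hS t s hlen).trans hSs) _ r).not_gt hpos

theorem statement_14_general (p q : ℝ)
    (S : Situation → Bool) (hS : Computable S) (ht : IsTemporal S) :
    S ∈ SelSet p q FsetC :=
  ⟨_, stepProcess_mem_FsetC hS _, p, Or.inl rfl, (selProc_stepProcess ht p).symm⟩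

/-- for real `p, q ∈ [0,1]`, every recursive temporal selection
process belongs to `𝒮^{p,q}_{𝓕_C}`. -/
theorem statement_14 (p q : ℝ) (hp0 : 0 ≤ p) (hp1 : p ≤ 1) (hq0 : 0 ≤ q) (hq1 : q ≤ 1)
    (S : Situation → Bool) (hS : Computable S) (ht : IsTemporal S) :
    S ∈ SelSet p q FsetC :=
  statement_14_general p q S hS ht
end
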